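/- If there exists a disjunctive interpolant for a formula φ and a set pos of positions in φ underneath only ∧ and ∨ connectives, then φ is unsatisfiable. -/

import Mathlib

namespace Stmt1

/-- Formulae of the constraint language, viewed as and/or combinations of
constraints (atoms). Positions "underneath only ∧ and ∨" are exactly the
positions visible in this tree structure; any other connectives are
swallowed inside the atoms.  `tr`/`fls` are the formulas true/false. -/
inductive Fml (Con : Type) : Type
  | atom (c : Con)
  | tr
  | fls
  | and (l r : Fml Con)
  | or (l r : Fml Con)

/-- Positions: paths in the formula tree (`true` = left argument, `false` = right). -/
abbrev Pos := List Bool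

variable {S V Con : Type} (U : S → Type)
  (interp : Con → (s : S) → (V → U s) → Prop) (cfv : Con → Set V)

/-- Evaluation of a formula in a structure `s` under a variable assignment. -/
def evalF : Fml Con → (s : S) → (V → U s) → Prop
  | .atom c, s, α => interp c s α
  | .tr, _, _ => True
  | .fls, _, _ => False
  | .and l r, s, α => evalF l s α ∧ evalF r s α
  | .or l r, s, α => evalF l s α ∨ evalF r s α

/-- Free variables of a formula. -/
def ffv : Fml Con → Set V
  | .atom c => cfv c
  | .tr => ∅
  | .fls => ∅
  | .and l r => ffv l ∪ ffv r
  | .or l r => ffv l ∪ ffv r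

/-- The subformula φ↓p at a position, if the position exists in φ. -/
def subAt : Fml Con → Pos → Option (Fml Con)
  | F, [] => some F
  | .and l r, b :: p => subAt (if b then l else r) p
  | .or l r, b :: p => subAt (if b then l else r) p
  | _, _ :: _ => none

/-- φ[p/ψ]: replace the subformula at position p by ψ. -/
def replaceAt : Fml Con → Pos → Fml Con → Fml Con
  | _, [], ψ => ψ
  | .and l r, b :: p, ψ =>
      if b then .and (replaceAt l p ψ) r else .and l (replaceAt r p ψ)
  | .or l r, b :: p, ψ =>
      if b then .or (replaceAt l p ψ) r else .or l (replaceAt r p ψ)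
  | F, _ :: _, _ => F

/-- Simultaneous (outermost-first) substitution of constraints at a set of
positions given by σ; `cur` is the current path. -/
def msubstAux (σ : Pos → Option Con) : Pos → Fml Con → Fml Con
  | cur, .and l r =>
      match σ cur with
      | some c => .atom c
      | none => .and (msubstAux σ (cur ++ [true]) l) (msubstAux σ (cur ++ [false]) r)
  | cur, .or l r =>
      match σ cur with
      | some c => .atom c
      | none => .or (msubstAux σ (cur ++ [true]) l) (msubstAux σ (cur ++ [false]) r)
  | cur, F =>
      match σ cur with
      | some c => .atom c
      | none => F

def msubst (σ : Pos → Option Con) (F : Fml Con) : Fml Con := msubstAux σ [] F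

/-- p is strictly above q. -/
def strictAbove (p q : Pos) : Prop := p <+: q ∧ p ≠ q

/-- q is a direct pos-child of p: q ∈ pos, p < q, and no r ∈ pos with p < r < q. -/
def dirChild (pos : Set Pos) (p q : Pos) : Prop :=
  q ∈ pos ∧ strictAbove p q ∧ ¬ ∃ r ∈ pos, strictAbove p r ∧ strictAbove r q

/-- q is a topmost position of pos. -/
def topmost (pos : Set Pos) (q : Pos) : Prop :=
  q ∈ pos ∧ ¬ ∃ r ∈ pos, strictAbove r q

open Classical in
/-- Substitution map replacing each direct pos-child q of p by the constraint I(q). -/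
noncomputable def childSub (pos : Set Pos) (I : Pos → Con) (p : Pos) : Pos → Option Con :=
  fun q => if dirChild pos p q then some (I q) else none

open Classical in
/-- Substitution map replacing each topmost position q of pos by I(q). -/
noncomputable def topSub (pos : Set Pos) (I : Pos → Con) : Pos → Option Con :=
  fun q => if topmost pos q then some (I q) else none

/-- Entailment over the class of structures. -/
def Entails (F G : Fml Con) : Prop := ∀ s α, evalF U interp F s α → evalF U interp G s α

/-- Unsatisfiability over the class of structures. -/
def Unsat (F : Fml Con) : Prop := ∀ s α, ¬ evalF U interp F s α

/-- Disjunctive interpolant for φ and pos (Definition 2 of the paper). -/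
def DisjInterpolant (φ : Fml Con) (pos : Set Pos) (I : Pos → Con) : Prop :=
  -- (1) for each p ∈ pos, (φ[q₁/I(q₁),…,qₙ/I(qₙ)])↓p ⊨ I(p), the qᵢ the direct pos-children
  (∀ p ∈ pos, ∀ G, subAt (msubst (childSub pos I p) φ) p = some G →
      Entails U interp G (.atom (I p))) ∧
  -- (2) for the topmost positions, φ[q₁/I(q₁),…,qₙ/I(qₙ)] ⊨ false
  Unsat U interp (msubst (topSub pos I) φ) ∧
  -- (3) fv(I(p)) ⊆ fv(φ↓p) ∩ fv(φ[p/true])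
  (∀ p ∈ pos, ∀ G, subAt φ p = some G →
      cfv (I p) ⊆ ffv cfv G ∩ ffv cfv (replaceAt φ p .tr))

/-! Working upwards from the deepest positions, every subformula `φ↓p` with `p ∈ pos` entails
`I p`: replacing the direct pos-children of `p` by their interpolants only weakens `φ↓p`,
because the replaced positions lie below `∧` and `∨` only, and condition (1) bounds the
weakened formula by `I p`. The same monotonicity at the topmost positions gives
`φ ⊨ φ[q₁/I(q₁),…,qₙ/I(qₙ)]`, which is unsatisfiable by condition (2). -/

namespace Fml

def height : Fml Con → ℕ
  | .and l r => max l.height r.height + 1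
  | .or l r => max l.height r.height + 1
  | _ => 0

end Fml

lemma height_add_length_le_of_subAt :
    ∀ {p : Pos} {F G : Fml Con}, subAt F p = some G → G.height + p.length ≤ F.height
  | [], F, G, h => by cases h; simp
  | b :: p, .and l r, G, h | b :: p, .or l r, G, h => by
    have := height_add_length_le_of_subAt (p := p) h
    cases b <;>
      simp only [Fml.height, List.length_cons, Bool.false_eq_true, ↓reduceIte] at this ⊢ <;>
      omega
  | _ :: _, .atom _, _, h | _ :: _, .tr, _, h | _ :: _, .fls, _, h => by cases h

lemma subAt_append :
    ∀ {p : Pos} {F G : Fml Con} (q : Pos), subAt F p = some G → subAt F (p ++ q) = subAt G q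
  | [], F, G, q, h => by cases h; rfl
  | _ :: p, .and _ _, _, q, h | _ :: p, .or _ _, _, q, h => subAt_append (p := p) q h
  | _ :: _, .atom _, _, _, h | _ :: _, .tr, _, _, h | _ :: _, .fls, _, _, h => by cases h

lemma msubstAux_of_eq_some {σ : Pos → Option Con} {cur : Pos} {c : Con} (h : σ cur = some c)
    (F : Fml Con) : msubstAux σ cur F = .atom c := by
  cases F <;> simp [msubstAux, h]

lemma subAt_msubstAux (σ : Pos → Option Con) :
    ∀ {p : Pos} {F G : Fml Con} (cur : Pos), (∀ r, strictAbove r p → σ (cur ++ r) = none) →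
      subAt F p = some G → subAt (msubstAux σ cur F) p = some (msubstAux σ (cur ++ p) G)
  | [], F, G, cur, _, h => by cases h; simp [subAt]
  | b :: p, .and l r, G, cur, hσ, h | b :: p, .or l r, G, cur, hσ, h => by
    have hcur : σ cur = none := by
      simpa using hσ [] ⟨List.nil_prefix, (List.cons_ne_nil b p).symm⟩
    have hbelow : ∀ r, strictAbove r p → σ (cur ++ [b] ++ r) = none :=
      fun r ⟨hr, hne⟩ => by
        simpa using hσ (b :: r) ⟨List.cons_prefix_cons.mpr ⟨rfl, hr⟩, by simpa using hne⟩
    have := subAt_msubstAux σ (p := p) (cur ++ [b]) hbelow h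
    cases b <;> simpa [msubstAux, hcur, subAt] using this
  | _ :: _, .atom _, _, _, _, h | _ :: _, .tr, _, _, _, h | _ :: _, .fls, _, _, _, h => by cases h

/-- `σ` is indexed by positions of the ambient formula, in which `F` sits at position `cur`. -/
def SubstSound (σ : Pos → Option Con) (cur : Pos) (F : Fml Con) : Prop :=
  ∀ q c, σ (cur ++ q) = some c → ∀ G, subAt F q = some G → Entails U interp G (.atom c)

section

variable {U interp} {σ : Pos → Option Con} {cur : Pos}

lemma SubstSound.child {F F' : Fml Con} (b : Bool) (hF : ∀ q, subAt F (b :: q) = subAt F' q)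
    (h : SubstSound U interp σ cur F) : SubstSound U interp σ (cur ++ [b]) F' :=
  fun q c hq G hG => h (b :: q) c (by simpa using hq) G (by rwa [hF])

lemma SubstSound.entails_of_eq_some {F : Fml Con} {c : Con} (h : SubstSound U interp σ cur F)
    (hσ : σ cur = some c) : Entails U interp F (msubstAux σ cur F) := by
  rw [msubstAux_of_eq_some hσ]
  exact h [] c (by simpa using hσ) F rfl

lemma SubstSound.entails_msubstAux {F : Fml Con} (h : SubstSound U interp σ cur F) :
    Entails U interp F (msubstAux σ cur F) := by
  induction F generalizing cur with
  | and l r ihl ihr =>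
    cases hσ : σ cur with
    | some c => exact h.entails_of_eq_some hσ
    | none =>
      intro s α
      simp only [msubstAux, hσ]
      exact And.imp (ihl (h.child true fun _ => rfl) s α) (ihr (h.child false fun _ => rfl) s α)
  | or l r ihl ihr =>
    cases hσ : σ cur with
    | some c => exact h.entails_of_eq_some hσ
    | none =>
      intro s α
      simp only [msubstAux, hσ]
      exact Or.imp (ihl (h.child true fun _ => rfl) s α) (ihr (h.child false fun _ => rfl) s α)
  | atom | tr | fls =>
    cases hσ : σ cur with
    | some c => exact h.entails_of_eq_some hσ
    | none => simp only [msubstAux, hσ]; exact fun _ _ => id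

end

lemma strictAbove_asymm {p q : Pos} (hpq : strictAbove p q) : ¬ strictAbove q p :=
  fun hqp => hpq.2 (hpq.1.eq_of_length (le_antisymm hpq.1.length_le hqp.1.length_le))

lemma childSub_eq_some {pos : Set Pos} {I : Pos → Con} {p q : Pos} {c : Con} :
    childSub pos I p q = some c ↔ dirChild pos p q ∧ I q = c := by
  unfold childSub; split_ifs <;> simp [*]

lemma childSub_eq_none_of_strictAbove {pos : Set Pos} {I : Pos → Con} {p r : Pos}
    (hr : strictAbove r p) : childSub pos I p r = none := by
  unfold childSub; rw [if_neg fun h => strictAbove_asymm hr h.2.1]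

lemma topSub_eq_some {pos : Set Pos} {I : Pos → Con} {q : Pos} {c : Con} :
    topSub pos I q = some c ↔ topmost pos q ∧ I q = c := by
  unfold topSub; split_ifs <;> simp [*]

theorem subAt_entails_of_childSub {φ : Fml Con} {pos : Set Pos} {I : Pos → Con}
    (hI : ∀ p ∈ pos, ∀ G, subAt (msubst (childSub pos I p) φ) p = some G →
      Entails U interp G (.atom (I p))) :
    ∀ p ∈ pos, ∀ G, subAt φ p = some G → Entails U interp G (.atom (I p)) := by
  intro p hp G hG
  induction hn : G.height using Nat.strong_induction_on generalizing p G with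
  | _ n ih =>
    have hsub := subAt_msubstAux (childSub pos I p) []
      (fun _ hr => childSub_eq_none_of_strictAbove hr) hG
    intro s α hGs
    refine hI p hp _ (by simpa [msubst] using hsub) s α (SubstSound.entails_msubstAux ?_ s α hGs)
    intro q c hq G' hG'
    obtain ⟨⟨hmem, ⟨-, hne⟩, -⟩, rfl⟩ := childSub_eq_some.mp hq
    have hq_ne : q ≠ [] := by rintro rfl; simp at hne
    have hlt : G'.height < n := by
      have := height_add_length_le_of_subAt hG'
      have := List.length_pos_iff.mpr hq_ne
      omega
    exact ih _ hlt _ hmem G' ((subAt_append q hG).trans hG') rfl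

theorem stmt1 (φ : Fml Con) (pos : Set Pos)
    (hex : ∃ I : Pos → Con, DisjInterpolant U interp cfv φ pos I) :
    Unsat U interp φ := by
  obtain ⟨I, hchild, htop, -⟩ := hex
  intro s α hφ
  refine htop s α (SubstSound.entails_msubstAux (fun q c hq G hG => ?_) s α hφ)
  obtain ⟨⟨hmem, -⟩, rfl⟩ := topSub_eq_some.mp (by simpa using hq)
  exact subAt_entails_of_childSub U interp hchild q hmem G hG

end Stmt1
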